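/- arXiv:2406.14384 — 5 statements merged into one kernel-verified Lean document; each statement's English description precedes it below -/
import Mathlib

section
/- Let F be a multicommodity flow in a graph G with edge capacities u and edge lengths ℓ, such that every flow path of F has length at most h. Let C be a 2h-length moving cut (i.e., C assigns each edge e a value C(e) ∈ [0,1], and increases the length of e by 2h·C(e)). Let F' be the subflow of F consisting of all flow paths P whose length in G−C exceeds 2h. Then val(F') ≤ 2·|C|·congest(F), where |C| = Σ_e u(e)·C(e) and congest(F) = max_e F(e)/u(e). -/
open Finset
open scoped Classical

/-- **Separation lemma.** Let `F` be a multicommodity flow in a graph with edge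
capacities `u` and lengths `ℓ`, all flow paths of length at most `h`. Let `C` be a
`2h`-length moving cut. Then the subflow of paths whose length in `G - C` exceeds `2h`
has value at most `2 * |C| * congest(F)`. -/
theorem separated_flow_le_cut {E P : Type*} [Fintype E] [Fintype P]
    (u ℓ : E → ℝ) (edges : P → Finset E) (F : P → ℝ) (C : E → ℝ)
    (h cong : ℝ) (hh : 0 < h) (hcong0 : 0 ≤ cong)
    (hu : ∀ e, 0 < u e) (hl : ∀ e, 0 ≤ ℓ e)
    (hF : ∀ p, 0 ≤ F p)
    (hlen : ∀ p, 0 < F p → (∑ e ∈ edges p, ℓ e) ≤ h)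
    (hC : ∀ e, 0 ≤ C e ∧ C e ≤ 1)
    (hcong : ∀ e, (∑ p ∈ univ.filter fun p => e ∈ edges p, F p) ≤ cong * u e) :
    (∑ p ∈ univ.filter fun p => 2 * h < ∑ e ∈ edges p, (ℓ e + 2 * h * C e), F p)
      ≤ 2 * (∑ e, u e * C e) * cong := by
  set S := univ.filter fun p => 2 * h < ∑ e ∈ edges p, (ℓ e + 2 * h * C e) with hS
  -- step 1: for p ∈ S, F p ≤ 2 * ∑_{e ∈ edges p} F p * C e
  have step1 : ∀ p ∈ S, F p ≤ 2 * ∑ e ∈ edges p, F p * C e := by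
    intro p hp
    rcases eq_or_lt_of_le (hF p) with h0 | h0
    · simp only [← h0]
      simp
    · rw [hS, mem_filter] at hp
      have hlt := hp.2
      rw [Finset.sum_add_distrib] at hlt
      have hl2 : h < ∑ e ∈ edges p, 2 * h * C e := by
        have := hlen p h0
        linarith
      have : 1 < 2 * ∑ e ∈ edges p, C e := by
        have hsum : (∑ e ∈ edges p, 2 * h * C e) = h * (2 * ∑ e ∈ edges p, C e) := by
          simp only [Finset.mul_sum]
          exact Finset.sum_congr rfl fun e _ => by ring
        rw [hsum] at hl2
        nlinarith
      calc F p = F p * 1 := by ring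
        _ ≤ F p * (2 * ∑ e ∈ edges p, C e) := by
            apply mul_le_mul_of_nonneg_left this.le (hF p)
        _ = 2 * ∑ e ∈ edges p, F p * C e := by rw [← Finset.mul_sum]; ring

  have key : (∑ p ∈ S, F p) ≤ 2 * ∑ p ∈ S, ∑ e ∈ edges p, F p * C e := by
    rw [Finset.mul_sum]
    exact Finset.sum_le_sum step1
  -- step 2: swap sums
  have swap : (∑ p ∈ S, ∑ e ∈ edges p, F p * C e)
      = ∑ e : E, C e * ∑ p ∈ S.filter (fun p => e ∈ edges p), F p := by
    calc (∑ p ∈ S, ∑ e ∈ edges p, F p * C e)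
        = ∑ p ∈ S, ∑ e : E, if e ∈ edges p then F p * C e else 0 := by
          refine Finset.sum_congr rfl fun p _ => ?_
          rw [Finset.sum_ite_mem, Finset.univ_inter]
      _ = ∑ e : E, ∑ p ∈ S, if e ∈ edges p then F p * C e else 0 := Finset.sum_comm
      _ = ∑ e : E, C e * ∑ p ∈ S.filter (fun p => e ∈ edges p), F p := by
          refine Finset.sum_congr rfl fun e _ => ?_
          conv_rhs => rw [Finset.mul_sum, Finset.sum_filter]
          refine Finset.sum_congr rfl fun p _ => ?_
          by_cases he : e ∈ edges p <;> simp [he, mul_comm]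
  have step2 : ∀ e : E, C e * ∑ p ∈ S.filter (fun p => e ∈ edges p), F p
      ≤ C e * (cong * u e) := by
    intro e
    apply mul_le_mul_of_nonneg_left _ (hC e).1
    calc (∑ p ∈ S.filter (fun p => e ∈ edges p), F p)
        ≤ ∑ p ∈ univ.filter (fun p => e ∈ edges p), F p := by
          apply Finset.sum_le_sum_of_subset_of_nonneg
          · intro p hp
            rw [mem_filter] at hp ⊢
            exact ⟨mem_univ p, hp.2⟩
          · intro p _ _; exact hF p
      _ ≤ cong * u e := hcong e
  calc (∑ p ∈ S, F p) ≤ 2 * ∑ p ∈ S, ∑ e ∈ edges p, F p * C e := key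
    _ = 2 * ∑ e : E, C e * ∑ p ∈ S.filter (fun p => e ∈ edges p), F p := by rw [swap]
    _ ≤ 2 * ∑ e : E, C e * (cong * u e) := by
        apply mul_le_mul_of_nonneg_left (Finset.sum_le_sum fun e _ => step2 e) (by norm_num)
    _ = 2 * (∑ e, u e * C e) * cong := by
        rw [Finset.mul_sum, mul_assoc, Finset.sum_mul, Finset.mul_sum]
        exact Finset.sum_congr rfl fun e _ => by ring
end

section
/- Let G be a graph with positive edge lengths ℓ, let h be a length bound and t a step bound, and define ℓ'(e) = ⌈t·ℓ(e)/h⌉. Then for any path p: max(|p|, t·ℓ(p)/h) ≤ ℓ'(p) ≤ |p| + t·ℓ(p)/h, where |p| is the number of edges of p and ℓ(p), ℓ'(p) are the total lengths under ℓ, ℓ'. In particular, (a) if ℓ(p) ≤ h and |p| ≤ t then ℓ'(p) ≤ 2t; and (b) if ℓ'(p) ≤ 2t then ℓ(p) ≤ 2h and |p| ≤ 2t. -/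
open Finset

section CeilSums

variable {ι α : Type*} [Ring α] [LinearOrder α] [IsStrictOrderedRing α] [FloorRing α]

theorem Finset.card_le_sum_ceil (s : Finset ι) {f : ι → α} (hf : ∀ i ∈ s, 0 < f i) :
    (s.card : α) ≤ ∑ i ∈ s, (⌈f i⌉ : α) := by
  rw [← nsmul_one, ← sum_const]
  exact sum_le_sum fun i hi => by exact_mod_cast Int.one_le_ceil_iff.mpr (hf i hi)

theorem Finset.sum_le_sum_ceil (s : Finset ι) (f : ι → α) :
    ∑ i ∈ s, f i ≤ ∑ i ∈ s, (⌈f i⌉ : α) :=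
  sum_le_sum fun i _ => Int.le_ceil (f i)

theorem Finset.sum_ceil_le_card_add_sum (s : Finset ι) (f : ι → α) :
    ∑ i ∈ s, (⌈f i⌉ : α) ≤ s.card + ∑ i ∈ s, f i := by
  calc ∑ i ∈ s, (⌈f i⌉ : α) ≤ ∑ i ∈ s, (1 + f i) :=
        sum_le_sum fun i _ => (Int.ceil_lt_add_one (f i)).le.trans_eq (add_comm _ _)
    _ = s.card + ∑ i ∈ s, f i := by rw [sum_add_distrib, sum_const, nsmul_one]

end CeilSums

theorem rounded_length_bounds_general {E : Type*}
    (ℓ : E → ℝ) (h t : ℝ) (ht : 1 ≤ t) (hh : 0 < h)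
    (hℓ : ∀ e, 0 < ℓ e) (p : Finset E) :
    (max (p.card : ℝ) (t * (∑ e ∈ p, ℓ e) / h) ≤ ∑ e ∈ p, (⌈t * ℓ e / h⌉ : ℝ)) ∧
    ((∑ e ∈ p, (⌈t * ℓ e / h⌉ : ℝ)) ≤ (p.card : ℝ) + t * (∑ e ∈ p, ℓ e) / h) ∧
    (((∑ e ∈ p, ℓ e) ≤ h ∧ (p.card : ℝ) ≤ t) → (∑ e ∈ p, (⌈t * ℓ e / h⌉ : ℝ)) ≤ 2 * t) ∧
    ((∑ e ∈ p, (⌈t * ℓ e / h⌉ : ℝ)) ≤ 2 * t →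
      ((∑ e ∈ p, ℓ e) ≤ 2 * h ∧ (p.card : ℝ) ≤ 2 * t)) := by
  have ht₀ : 0 < t := one_pos.trans_le ht
  have hscale : t * (∑ e ∈ p, ℓ e) / h = ∑ e ∈ p, t * ℓ e / h := by
    rw [mul_sum, sum_div]
  have hcard := p.card_le_sum_ceil fun e _ => div_pos (mul_pos ht₀ (hℓ e)) hh
  have hlow : t * (∑ e ∈ p, ℓ e) / h ≤ ∑ e ∈ p, (⌈t * ℓ e / h⌉ : ℝ) :=
    hscale ▸ p.sum_le_sum_ceil _
  have hup : ∑ e ∈ p, (⌈t * ℓ e / h⌉ : ℝ) ≤ p.card + t * (∑ e ∈ p, ℓ e) / h :=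
    hscale ▸ p.sum_ceil_le_card_add_sum _
  refine ⟨max_le hcard hlow, hup, fun ⟨hlen, hsize⟩ => ?_, fun hle => ⟨?_, hcard.trans hle⟩⟩
  · have : t * (∑ e ∈ p, ℓ e) / h ≤ t :=
      (div_le_iff₀ hh).2 (mul_le_mul_of_nonneg_left hlen ht₀.le)
    linarith
  · have : t * (∑ e ∈ p, ℓ e) ≤ t * (2 * h) := by
      linarith [(div_le_iff₀ hh).1 (hlow.trans hle)]
    exact le_of_mul_le_mul_left this ht₀

/-- **Rounding lemma.** For positive edge lengths `ℓ`, bounds `h > 0`, `t ≥ 1`, and the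
rounded lengths `ℓ'(e) = ⌈t·ℓ(e)/h⌉`, every path `p` satisfies
`max(|p|, t·ℓ(p)/h) ≤ ℓ'(p) ≤ |p| + t·ℓ(p)/h`; in particular (a) `ℓ(p) ≤ h` and `|p| ≤ t`
imply `ℓ'(p) ≤ 2t`, and (b) `ℓ'(p) ≤ 2t` implies `ℓ(p) ≤ 2h` and `|p| ≤ 2t`. -/
theorem rounded_length_bounds {E : Type*} [DecidableEq E]
    (ℓ : E → ℝ) (h t : ℝ) (ht : 1 ≤ t) (hh : 0 < h)
    (hℓ : ∀ e, 0 < ℓ e) (p : Finset E) :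
    (max (p.card : ℝ) (t * (∑ e ∈ p, ℓ e) / h) ≤ ∑ e ∈ p, (⌈t * ℓ e / h⌉ : ℝ)) ∧
    ((∑ e ∈ p, (⌈t * ℓ e / h⌉ : ℝ)) ≤ (p.card : ℝ) + t * (∑ e ∈ p, ℓ e) / h) ∧
    (((∑ e ∈ p, ℓ e) ≤ h ∧ (p.card : ℝ) ≤ t) → (∑ e ∈ p, (⌈t * ℓ e / h⌉ : ℝ)) ≤ 2 * t) ∧
    ((∑ e ∈ p, (⌈t * ℓ e / h⌉ : ℝ)) ≤ 2 * t →
      ((∑ e ∈ p, ℓ e) ≤ 2 * h ∧ (p.card : ℝ) ≤ 2 * t)) :=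
  rounded_length_bounds_general ℓ h t ht hh hℓ p
end

section
/- Let F* be a maximum-value multicommodity flow partially routing integral demand D with step length t, total length T, and congestion 1, in a graph G with integral edge lengths. For p ≥ 0, let F*_p be the subflow of F* of flow paths of length at most 2^p, routing demand D*_p. Suppose F_{p-1} is any flow routing a subdemand D_{F_{p-1}} of D with val(F_{p-1}) ≥ val(F*_{p-1}). Then the demand D^Δ_p = min(D − D_{F_{p-1}}, D*_p) (pointwise minimum) is routable by a flow of step length t, length at most 2^p, and congestion 1, and |D^Δ_p| ≥ val(F*_p) − val(F_{p-1}). -/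
/-! Since `D^Δ_p ≤ D*_p` pointwise, scaling every flow path of `F*_p` from `v` to `w` by
`D^Δ_p(v, w) / D*_p(v, w) ∈ [0, 1]` gives a subflow of `F*_p` routing exactly `D^Δ_p`; it
inherits the step, length and congestion bounds of `F*_p`. The size bound is summed from
`min (c - b) a ≥ a - b` for `a ≤ c` and `0 ≤ b`, with `a = D*_p`, `b = D_{F_{p-1}}`, `c = D`. -/

open Finset
open scoped Classical

noncomputable section

/-- The consecutive edge pairs of a walk given by its vertex list. -/
def pathPairs {V : Type*} (p : List V) : List (V × V) := p.zip p.tail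

/-- The number of edges (steps) of a walk. -/
def steps {V : Type*} (p : List V) : ℕ := (pathPairs p).length

/-- The length of a walk with respect to edge lengths `ℓ`. -/
def plen {V : Type*} (ℓ : V → V → ℝ) (p : List V) : ℝ :=
  ((pathPairs p).map fun q => ℓ q.1 q.2).sum

/-- `p` is a (nonempty) walk of the graph with adjacency `adj`. -/
def IsWalk {V : Type*} (adj : V → V → Prop) (p : List V) : Prop :=
  p ≠ [] ∧ p.Chain' adj

/-- The total flow of `F` through the (undirected) edge `{x, y}`. -/
def edgeFlow {V : Type*} [DecidableEq V] (F : List V →₀ ℝ) (x y : V) : ℝ :=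
  F.sum fun p c => c * (((pathPairs p).count (x, y) + (pathPairs p).count (y, x) : ℕ) : ℝ)

/-- The demand routed by the flow `F` from `v` to `w`. -/
def routed {V : Type*} [DecidableEq V] (F : List V →₀ ℝ) (v w : V) : ℝ :=
  F.sum fun p c => if p.head? = some v ∧ p.getLast? = some w then c else 0

/-- The total value of the flow `F`. -/
def flowVal {V : Type*} (F : List V →₀ ℝ) : ℝ := F.sum fun _ c => c

/-- A demand `D` is `A`-respecting if its row and column sums are bounded by `A`. -/
def ARespecting {V : Type*} [Fintype V] (A : V → ℝ) (D : V → V → ℝ) : Prop :=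
  ∀ v, (∑ w, D v w) ≤ A v ∧ (∑ w, D w v) ≤ A v

namespace Finsupp

variable {α : Type*}

lemma support_subset_of_le {F G : α →₀ ℝ} (hG0 : ∀ q, 0 ≤ G q) (hGF : ∀ q, G q ≤ F q) :
    G.support ⊆ F.support := fun q hq => by
  rw [mem_support_iff] at hq ⊢
  exact fun hF => hq (le_antisymm (hF ▸ hGF q) (hG0 q))

lemma filter_apply_le {F : α →₀ ℝ} (hF : ∀ q, 0 ≤ F q) (P : α → Prop) [DecidablePred P]
    (q : α) : F.filter P q ≤ F q := by
  rw [filter_apply]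
  split_ifs
  exacts [le_rfl, hF q]

lemma filter_apply_nonneg {F : α →₀ ℝ} (hF : ∀ q, 0 ≤ F q) (P : α → Prop) [DecidablePred P]
    (q : α) : 0 ≤ F.filter P q := by
  rw [filter_apply]
  split_ifs
  exacts [hF q, le_rfl]

end Finsupp

section Flows

variable {V : Type*}

def endpointWeight (s : V → V → ℝ) (q : List V) : ℝ :=
  q.head?.elim 0 fun v => q.getLast?.elim 0 fun w => s v w

lemma endpointWeight_of_head_getLast {s : V → V → ℝ} {q : List V} {v w : V}
    (hv : q.head? = some v) (hw : q.getLast? = some w) : endpointWeight s q = s v w := by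
  simp [endpointWeight, hv, hw]

lemma endpointWeight_nonneg {s : V → V → ℝ} (h : ∀ v w, 0 ≤ s v w) (q : List V) :
    0 ≤ endpointWeight s q := by
  unfold endpointWeight
  rcases q.head? with _ | v <;> rcases q.getLast? with _ | w <;> simp [h]

lemma endpointWeight_le_one {s : V → V → ℝ} (h : ∀ v w, s v w ≤ 1) (q : List V) :
    endpointWeight s q ≤ 1 := by
  unfold endpointWeight
  rcases q.head? with _ | v <;> rcases q.getLast? with _ | w <;> simp [h]

def scaleByEndpoints (F : List V →₀ ℝ) (s : V → V → ℝ) : List V →₀ ℝ :=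
  Finsupp.onFinset F.support (fun q => endpointWeight s q * F q) fun q hq => by
    simpa using right_ne_zero_of_mul hq

@[simp]
lemma scaleByEndpoints_apply (F : List V →₀ ℝ) (s : V → V → ℝ) (q : List V) :
    scaleByEndpoints F s q = endpointWeight s q * F q := rfl

lemma support_scaleByEndpoints_subset (F : List V →₀ ℝ) (s : V → V → ℝ) :
    (scaleByEndpoints F s).support ⊆ F.support :=
  Finsupp.support_onFinset_subset

lemma flowVal_filter (F : List V →₀ ℝ) (P : List V → Prop) [DecidablePred P] :
    flowVal (F.filter P) = F.sum fun q c => if P q then c else 0 := by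
  rw [flowVal, Finsupp.sum_filter_index, Finsupp.support_filter, Finset.sum_filter, Finsupp.sum]

variable [DecidableEq V]

lemma routed_nonneg {F : List V →₀ ℝ} (hF : ∀ q, 0 ≤ F q) (v w : V) : 0 ≤ routed F v w :=
  Finset.sum_nonneg fun q _ => by dsimp only; split_ifs <;> simp [hF]

lemma routed_mono {F G : List V →₀ ℝ} (hG0 : ∀ q, 0 ≤ G q) (hGF : ∀ q, G q ≤ F q)
    (v w : V) : routed G v w ≤ routed F v w := by
  rw [routed, Finsupp.sum_of_support_subset _ (Finsupp.support_subset_of_le hG0 hGF) _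
    (by simp), routed, Finsupp.sum]
  exact Finset.sum_le_sum fun q _ => by split_ifs <;> simp [hGF]

lemma edgeFlow_mono {F G : List V →₀ ℝ} (hG0 : ∀ q, 0 ≤ G q) (hGF : ∀ q, G q ≤ F q)
    (x y : V) : edgeFlow G x y ≤ edgeFlow F x y := by
  rw [edgeFlow, Finsupp.sum_of_support_subset _ (Finsupp.support_subset_of_le hG0 hGF) _
    (by simp), edgeFlow, Finsupp.sum]
  exact Finset.sum_le_sum fun q _ => mul_le_mul_of_nonneg_right (hGF q) (Nat.cast_nonneg _)

lemma routed_filter (F : List V →₀ ℝ) (P : List V → Prop) [DecidablePred P] (v w : V) :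
    routed (F.filter P) v w =
      F.sum fun q c => if q.head? = some v ∧ q.getLast? = some w ∧ P q then c else 0 := by
  rw [routed, Finsupp.sum, Finsupp.support_filter, Finset.sum_filter, Finsupp.sum]
  refine Finset.sum_congr rfl fun q _ => ?_
  by_cases hP : P q <;> simp [hP]

lemma routed_scaleByEndpoints (F : List V →₀ ℝ) (s : V → V → ℝ) (v w : V) :
    routed (scaleByEndpoints F s) v w = s v w * routed F v w := by
  rw [routed, Finsupp.sum_of_support_subset _ (support_scaleByEndpoints_subset F s) _ (by simp),
    routed, Finsupp.sum, Finset.mul_sum]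
  refine Finset.sum_congr rfl fun q _ => ?_
  split_ifs with h
  · rw [scaleByEndpoints_apply, endpointWeight_of_head_getLast h.1 h.2]
  · rw [mul_zero]

lemma exists_subflow_routed_eq {F : List V →₀ ℝ} (hF0 : ∀ q, 0 ≤ F q) {Δ : V → V → ℝ}
    (hΔ0 : ∀ v w, 0 ≤ Δ v w) (hΔF : ∀ v w, Δ v w ≤ routed F v w) :
    ∃ G : List V →₀ ℝ, (∀ q, 0 ≤ G q) ∧ (∀ q, G q ≤ F q) ∧ ∀ v w, routed G v w = Δ v w := by
  have hRF0 := routed_nonneg hF0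
  refine ⟨scaleByEndpoints F fun v w => Δ v w / routed F v w, fun q => ?_, fun q => ?_,
    fun v w => ?_⟩
  · exact mul_nonneg (endpointWeight_nonneg (fun v w => div_nonneg (hΔ0 v w) (hRF0 v w)) q)
      (hF0 q)
  · exact mul_le_of_le_one_left (hF0 q)
      (endpointWeight_le_one (fun v w => div_le_one_of_le₀ (hΔF v w) (hRF0 v w)) q)
  · rw [routed_scaleByEndpoints, div_mul_cancel_of_imp]
    exact fun h => le_antisymm (h ▸ hΔF v w) (hΔ0 v w)

lemma sum_routed_eq_flowVal [Fintype V] {F : List V →₀ ℝ} (hF : ∀ q ∈ F.support, q ≠ []) :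
    ∑ v, ∑ w, routed F v w = flowVal F := by
  simp only [routed, Finsupp.sum]
  rw [(Finset.sum_congr rfl fun _ _ => Finset.sum_comm).trans Finset.sum_comm, flowVal,
    Finsupp.sum]
  refine Finset.sum_congr rfl fun q hq => ?_
  simp [List.head?_eq_some_head (hF q hq), List.getLast?_eq_some_getLast (hF q hq), ite_and]

lemma flowVal_sub_le_sum_min_residual [Fintype V] {F G : List V →₀ ℝ} {D : V → V → ℝ}
    (hF : ∀ q ∈ F.support, q ≠ []) (hG : ∀ q ∈ G.support, q ≠ []) (hG0 : ∀ q, 0 ≤ G q)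
    (hFD : ∀ v w, routed F v w ≤ D v w) :
    flowVal F - flowVal G ≤ ∑ v, ∑ w, min (D v w - routed G v w) (routed F v w) :=
  calc flowVal F - flowVal G = ∑ v, ∑ w, (routed F v w - routed G v w) := by
        simp only [← sum_routed_eq_flowVal hF, ← sum_routed_eq_flowVal hG,
          Finset.sum_sub_distrib]
    _ ≤ _ := by
        gcongr with v _ w _
        exact le_min (by linarith [hFD v w]) (by linarith [routed_nonneg hG0 v w])

end Flows

theorem residual_demand_routable_general {V : Type*} [Fintype V] [DecidableEq V]
    (adj : V → V → Prop) (u ℓ : V → V → ℝ) (D : V → V → ℝ)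
    (t : ℕ) (p₀ : ℕ)
    (Fs : List V →₀ ℝ)
    (hFs0 : ∀ p, 0 ≤ Fs p)
    (hFsw : ∀ p ∈ Fs.support, IsWalk adj p ∧ steps p ≤ t)
    (hFscong : ∀ x y, edgeFlow Fs x y ≤ u x y)
    (hFsD : ∀ v w, routed Fs v w ≤ D v w)
    (Fm : List V →₀ ℝ)
    (hFm0 : ∀ p, 0 ≤ Fm p)
    (hFmw : ∀ p ∈ Fm.support, IsWalk adj p)
    (hFmD : ∀ v w, routed Fm v w ≤ D v w) :
    ∃ Fd : List V →₀ ℝ,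
      (∀ q, 0 ≤ Fd q) ∧
      (∀ q ∈ Fd.support, IsWalk adj q ∧ steps q ≤ t ∧ plen ℓ q ≤ 2 ^ p₀) ∧
      (∀ x y, edgeFlow Fd x y ≤ u x y) ∧
      (∀ v w, routed Fd v w =
        min (D v w - routed Fm v w)
          (Fs.sum fun q c =>
            if q.head? = some v ∧ q.getLast? = some w ∧ plen ℓ q ≤ 2 ^ p₀
            then c else 0)) ∧
      ((Fs.sum fun q c => if plen ℓ q ≤ 2 ^ p₀ then c else 0) - flowVal Fm
        ≤ ∑ v, ∑ w, min (D v w - routed Fm v w)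
          (Fs.sum fun q c =>
            if q.head? = some v ∧ q.getLast? = some w ∧ plen ℓ q ≤ 2 ^ p₀
            then c else 0)) := by
  set Fp := Fs.filter fun q => plen ℓ q ≤ 2 ^ p₀
  have hDp (v w : V) : (Fs.sum fun q c =>
      if q.head? = some v ∧ q.getLast? = some w ∧ plen ℓ q ≤ 2 ^ p₀ then c else 0) =
      routed Fp v w := (routed_filter _ _ v w).symm
  rw [← flowVal_filter]
  simp only [hDp]
  have hFp0 := Finsupp.filter_apply_nonneg hFs0 fun q => plen ℓ q ≤ 2 ^ p₀
  have hFp_le := Finsupp.filter_apply_le hFs0 fun q => plen ℓ q ≤ 2 ^ p₀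
  have hFpw (q : List V) (hq : q ∈ Fp.support) :
      IsWalk adj q ∧ steps q ≤ t ∧ plen ℓ q ≤ 2 ^ p₀ := by
    rw [Finsupp.support_filter, Finset.mem_filter] at hq
    exact and_assoc.1 ⟨hFsw q hq.1, hq.2⟩
  obtain ⟨Fd, hFd0, hFd_le, hFd⟩ := exists_subflow_routed_eq hFp0
    (fun v w => le_min (sub_nonneg.2 (hFmD v w)) (routed_nonneg hFp0 v w))
    (fun v w => min_le_right (D v w - routed Fm v w) _)
  refine ⟨Fd, hFd0, fun q hq => hFpw q (Finsupp.support_subset_of_le hFd0 hFd_le hq),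
    fun x y => (edgeFlow_mono hFd0 (fun q => (hFd_le q).trans (hFp_le q)) x y).trans
      (hFscong x y), hFd, ?_⟩
  exact flowVal_sub_le_sum_min_residual (fun q hq => (hFpw q hq).1.1) (fun q hq => (hFmw q hq).1)
    hFm0 fun v w => (routed_mono hFp0 hFp_le v w).trans (hFsD v w)

/-- **Per-scale residual demand is routable (analysis of `LowStepNonConcFlow`).** Let
`F*` (=`Fs`) be a maximum-value flow partially routing the integral demand `D` with step
length `t`, total length `T` and congestion `1`; let `F*_p` be its subflow of paths of
length at most `2^p`, routing demand `D*_p`. If `F_{p−1}` (=`Fm`) is any flow routing a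
subdemand of `D` with `val(F_{p−1}) ≥ val(F*_{p−1})`, then the demand
`D^Δ_p = min(D − D_{F_{p−1}}, D*_p)` is routable by a flow of step length `t`, maximum
length `2^p` and congestion `1`, and `|D^Δ_p| ≥ val(F*_p) − val(F_{p−1})`. -/
theorem residual_demand_routable {V : Type*} [Fintype V] [DecidableEq V]
    (adj : V → V → Prop) (u ℓ : V → V → ℝ) (D : V → V → ℝ)
    (t : ℕ) (T : ℝ) (p₀ : ℕ)
    (hl : ∀ x y, adj x y → 1 ≤ ℓ x y)
    (hD0 : ∀ v w, 0 ≤ D v w) (hDint : ∀ v w, ∃ k : ℕ, D v w = (k : ℝ))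
    (Fs : List V →₀ ℝ)
    (hFs0 : ∀ p, 0 ≤ Fs p)
    (hFsw : ∀ p ∈ Fs.support, IsWalk adj p ∧ steps p ≤ t)
    (hFscong : ∀ x y, edgeFlow Fs x y ≤ u x y)
    (hFsD : ∀ v w, routed Fs v w ≤ D v w)
    (hFstot : (Fs.sum fun p c => c * plen ℓ p) ≤ T)
    (hFsmax : ∀ F2 : List V →₀ ℝ, (∀ p, 0 ≤ F2 p) →
      (∀ p ∈ F2.support, IsWalk adj p ∧ steps p ≤ t) →
      (∀ x y, edgeFlow F2 x y ≤ u x y) →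
      (∀ v w, routed F2 v w ≤ D v w) →
      (F2.sum fun p c => c * plen ℓ p) ≤ T →
      flowVal F2 ≤ flowVal Fs)
    (Fm : List V →₀ ℝ)
    (hFm0 : ∀ p, 0 ≤ Fm p)
    (hFmw : ∀ p ∈ Fm.support, IsWalk adj p)
    (hFmD : ∀ v w, routed Fm v w ≤ D v w)
    (hFmval : (Fs.sum fun q c => if plen ℓ q ≤ 2 ^ (p₀ - 1) then c else 0)
      ≤ flowVal Fm) :
    ∃ Fd : List V →₀ ℝ,
      (∀ q, 0 ≤ Fd q) ∧
      (∀ q ∈ Fd.support, IsWalk adj q ∧ steps q ≤ t ∧ plen ℓ q ≤ 2 ^ p₀) ∧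
      (∀ x y, edgeFlow Fd x y ≤ u x y) ∧
      (∀ v w, routed Fd v w =
        min (D v w - routed Fm v w)
          (Fs.sum fun q c =>
            if q.head? = some v ∧ q.getLast? = some w ∧ plen ℓ q ≤ 2 ^ p₀
            then c else 0)) ∧
      ((Fs.sum fun q c => if plen ℓ q ≤ 2 ^ p₀ then c else 0) - flowVal Fm
        ≤ ∑ v, ∑ w, min (D v w - routed Fm v w)
          (Fs.sum fun q c =>
            if q.head? = some v ∧ q.getLast? = some w ∧ plen ℓ q ≤ 2 ^ p₀
            then c else 0)) :=
  residual_demand_routable_general adj u ℓ D t p₀ Fs hFs0 hFsw hFscong hFsD Fm hFm0 hFmw hFmD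
end
end

section
/- In the multiplicative-weights boosting algorithm: suppose at each iteration i the length function on edge e is multiplied by (1 + (ε/κ)·z^(i)F^(i)(e)/u(e)) where z^(i)F^(i)(e) ≤ κ·u(e), the initial length of e is δ/u(e), and the final length of e is less than 1/u(e). Then the total flow routed through e over all iterations, Σ_i z^(i)F^(i)(e), is strictly less than κ·log_{1+ε}(1/δ) times u(e). Consequently, scaling the accumulated flow down by κ·log_{1+ε}(1/δ) yields a capacity-respecting flow. -/
/-!
Each iteration multiplies the length by `1 + x ε` with `x ∈ [0, 1]` the fraction of `κ u` routed
through the edge, and by Bernoulli's inequality `1 + x ε ≥ (1 + ε) ^ x`. Hence the length is at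
least `(δ / u) (1 + ε) ^ (S / (κ u))` where `S` is the total flow, and since it stays below `1 / u`,
`S / (κ u) < log_{1+ε} (1 / δ)`.
-/

open Finset

theorem eq_mul_prod_Icc_of_succ_eq_mul {M : Type*} [CommMonoid M] {ℓ g : ℕ → M}
    (hrec : ∀ i, ℓ (i + 1) = ℓ i * g (i + 1)) (n : ℕ) :
    ℓ n = ℓ 0 * ∏ i ∈ Icc 1 n, g i := by
  induction n with
  | zero => simp
  | succ n ih => rw [hrec, ih, prod_Icc_succ_top (by omega), mul_assoc]

theorem one_add_rpow_sum_le_prod {ι : Type*} (s : Finset ι) {ε : ℝ} (hε : -1 < ε) {x : ι → ℝ}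
    (hx : ∀ i ∈ s, 0 ≤ x i ∧ x i ≤ 1) :
    (1 + ε) ^ (∑ i ∈ s, x i) ≤ ∏ i ∈ s, (1 + x i * ε) := by
  rw [Real.rpow_sum_of_pos (by linarith)]
  exact prod_le_prod (fun i _ => Real.rpow_nonneg (by linarith) _)
    fun i hi => rpow_one_add_le_one_add_mul_self hε.le (hx i hi).1 (hx i hi).2

theorem sum_lt_logb_of_succ_eq_mul_one_add {ε a b : ℝ} {ℓ x : ℕ → ℝ} {T : ℕ}
    (hε : 0 < ε) (ha : 0 < a) (h0 : ℓ 0 = a) (hx : ∀ i, 0 ≤ x i ∧ x i ≤ 1)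
    (hrec : ∀ i, ℓ (i + 1) = ℓ i * (1 + x (i + 1) * ε)) (hT : ℓ T < b) :
    ∑ i ∈ Icc 1 T, x i < Real.logb (1 + ε) (b / a) := by
  have hgrowth : a * (1 + ε) ^ (∑ i ∈ Icc 1 T, x i) ≤ ℓ T := by
    rw [eq_mul_prod_Icc_of_succ_eq_mul (g := fun i => 1 + x i * ε) hrec, h0]
    gcongr
    exact one_add_rpow_sum_le_prod _ (by linarith) fun i _ => hx i
  have hb : 0 < b := lt_of_le_of_lt (by positivity) (hgrowth.trans_lt hT)
  rw [Real.lt_logb_iff_rpow_lt (by linarith) (div_pos hb ha), lt_div_iff₀' ha]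
  exact hgrowth.trans_lt hT

theorem mwu_congestion_bound_general (u ε κ δ : ℝ) (T : ℕ) (f ℓ : ℕ → ℝ)
    (hu : 0 < u) (hε0 : 0 < ε) (hκ : 1 ≤ κ)
    (hδ0 : 0 < δ)
    (h0 : ℓ 0 = δ / u)
    (hf : ∀ i, 0 ≤ f i ∧ f i ≤ κ * u)
    (hrec : ∀ i, ℓ (i + 1) = ℓ i * (1 + (ε / κ) * f (i + 1) / u))
    (hfin : ℓ T < 1 / u) :
    (∑ i ∈ Finset.Icc 1 T, f i) < κ * Real.logb (1 + ε) (1 / δ) * u ∧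
    (∑ i ∈ Finset.Icc 1 T, f i) / (κ * Real.logb (1 + ε) (1 / δ)) ≤ u := by
  have hκu : 0 < κ * u := by positivity
  have hfraction : ∀ i, 0 ≤ f i / (κ * u) ∧ f i / (κ * u) ≤ 1 := fun i =>
    ⟨div_nonneg (hf i).1 hκu.le, (div_le_one hκu).2 (hf i).2⟩
  have hrec' : ∀ i, ℓ (i + 1) = ℓ i * (1 + f (i + 1) / (κ * u) * ε) := fun i => by
    rw [hrec]; field_simp
  have hlog := sum_lt_logb_of_succ_eq_mul_one_add hε0 (by positivity) h0 hfraction hrec' hfin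
  rw [← sum_div, div_div_div_cancel_right₀ hu.ne', div_lt_iff₀ hκu] at hlog
  have hsum : 0 ≤ ∑ i ∈ Icc 1 T, f i := sum_nonneg fun i _ => (hf i).1
  have hcongestion : ∑ i ∈ Icc 1 T, f i < κ * Real.logb (1 + ε) (1 / δ) * u := by linarith
  have hscale : 0 < κ * Real.logb (1 + ε) (1 / δ) := pos_of_mul_pos_left (by linarith) hu.le
  exact ⟨hcongestion, div_le_of_le_mul₀ hscale.le hu.le (by linarith)⟩

/-- **Multiplicative-weights edge-length growth.** If the length of an edge of capacity
`u` starts at `δ/u`, is multiplied at iteration `i` by `(1 + (ε/κ)·f(i)/u)` where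
`f(i) = z⁽ⁱ⁾F⁽ⁱ⁾(e) ≤ κ·u` is the flow routed through the edge at iteration `i`, and
ends below `1/u`, then the total flow routed through the edge is strictly less than
`κ·log_{1+ε}(1/δ)` times `u`; consequently scaling by `κ·log_{1+ε}(1/δ)` respects the
capacity. -/
theorem mwu_congestion_bound (u ε κ δ : ℝ) (T : ℕ) (f ℓ : ℕ → ℝ)
    (hu : 0 < u) (hε0 : 0 < ε) (hε1 : ε < 1) (hκ : 1 ≤ κ)
    (hδ0 : 0 < δ) (hδ1 : δ < 1)
    (h0 : ℓ 0 = δ / u)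
    (hf : ∀ i, 0 ≤ f i ∧ f i ≤ κ * u)
    (hrec : ∀ i, ℓ (i + 1) = ℓ i * (1 + (ε / κ) * f (i + 1) / u))
    (hfin : ℓ T < 1 / u) :
    (∑ i ∈ Finset.Icc 1 T, f i) < κ * Real.logb (1 + ε) (1 / δ) * u ∧
    (∑ i ∈ Finset.Icc 1 T, f i) / (κ * Real.logb (1 + ε) (1 / δ)) ≤ u :=
  mwu_congestion_bound_general u ε κ δ T f ℓ hu hε0 hκ hδ0 h0 hf hrec hfin
end

section
/- Let ε' > 0, β ≥ 1, m ≥ 1 and δ ∈ (0,1). Suppose a sequence of values D(0) = mδ and D(i) ≤ (1 + ε'z^(i)/β)·D(i−1) with z^(i) ∈ [0,1] satisfies D(t) ≥ 1 at the first index t. Then, with Z = Σ_{j≤t−1} z^(j): β/Z ≤ ε' / ln(1/((1+ε')mδ)). Equivalently, Z ≥ (β/ε')·ln(1/((1+ε')mδ)). -/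
open Finset Real

/-- Grönwall bounds `D n`; the last step's factor is bounded by `1 + c` rather than by an
exponential, which is why `x (n + 1)` does not enter the sum. -/
lemma one_le_mul_exp_sum_of_growth {c : ℝ} {x D : ℕ → ℝ} {n : ℕ}
    (hx : ∀ i, 0 ≤ x i) (hxc : ∀ i, x i ≤ c) (hD0 : 0 ≤ D 0)
    (hrec : ∀ i, D (i + 1) ≤ (1 + x (i + 1)) * D i) (hD : 1 ≤ D (n + 1)) :
    1 ≤ (1 + c) * D 0 * exp (∑ i ∈ Icc 1 n, x i) := by
  have hgronwall : D n ≤ D 0 * exp (∑ i ∈ Icc 1 n, x i) := by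
    have := discrete_gronwall (n₀ := 0) (b := 0) (c := fun i ↦ x (i + 1)) hD0
      (fun i _ ↦ by simpa using hrec i) (fun i _ ↦ hx _) (fun _ _ ↦ le_rfl) (Nat.zero_le n)
    rwa [sum_Ico_add' x, zero_add, Ico_add_one_right_eq_Icc, Pi.zero_def, sum_const_zero,
      add_zero] at this
  have hDn : 0 < D n :=
    pos_of_mul_pos_right (one_pos.trans_le (hD.trans (hrec n))) (by linarith [hx (n + 1)])
  calc 1 ≤ D (n + 1) := hD
    _ ≤ (1 + x (n + 1)) * D n := hrec n
    _ ≤ (1 + c) * D n := by gcongr; exact hxc _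
    _ ≤ (1 + c) * (D 0 * exp (∑ i ∈ Icc 1 n, x i)) := by
      gcongr; linarith [hx 0, hxc 0]
    _ = (1 + c) * D 0 * exp (∑ i ∈ Icc 1 n, x i) := by ring

lemma log_one_div_le_of_one_le_mul_exp {a y : ℝ} (ha : 0 < a) (h : 1 ≤ a * exp y) :
    log (1 / a) ≤ y :=
  (log_le_iff_le_exp (by positivity)).2 ((div_le_iff₀ ha).2 (by linarith))

lemma div_le_div_and_div_mul_le_of_le_mul_div {β ε L Z : ℝ} (hβ : 0 < β) (hε : 0 < ε)
    (hL : 0 < L) (h : L ≤ ε * Z / β) : β / Z ≤ ε / L ∧ β / ε * L ≤ Z := by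
  have hLZ : β * L ≤ ε * Z := (le_div_iff₀' hβ).1 h
  have hZ : 0 < Z := by nlinarith
  constructor
  · rw [div_le_div_iff₀ hZ hL]; linarith
  · rw [div_mul_eq_mul_div, div_le_iff₀' hε]; exact hLZ

theorem dual_growth_bound_general (ε' β m δ : ℝ) (t : ℕ) (z D : ℕ → ℝ)
    (hε : 0 < ε') (hβ : 1 ≤ β) (hm : 1 ≤ m) (hδ0 : 0 < δ)
    (hmδ : (1 + ε') * m * δ < 1)
    (hz : ∀ i, 0 ≤ z i ∧ z i ≤ 1)
    (hD0 : D 0 = m * δ)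
    (hrec : ∀ i : ℕ, 1 ≤ i → D i ≤ (1 + ε' * z i / β) * D (i - 1))
    (ht : 1 ≤ D t) :
    β / (∑ j ∈ Finset.Icc 1 (t - 1), z j)
        ≤ ε' / Real.log (1 / ((1 + ε') * m * δ)) ∧
    (β / ε') * Real.log (1 / ((1 + ε') * m * δ)) ≤ ∑ j ∈ Finset.Icc 1 (t - 1), z j := by
  have hβ0 : 0 < β := by linarith
  have hmδ0 : 0 < m * δ := mul_pos (by linarith) hδ0
  obtain ⟨n, rfl⟩ : ∃ n, t = n + 1 := by
    refine Nat.exists_eq_succ_of_ne_zero ?_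
    rintro rfl
    nlinarith
  have hgrowth := one_le_mul_exp_sum_of_growth (c := ε') (x := fun i ↦ ε' * z i / β)
    (fun i ↦ by have := (hz i).1; positivity)
    (fun i ↦ div_le_of_le_mul₀ hβ0.le hε.le (by nlinarith [hz i]))
    (hD0 ▸ hmδ0.le) (fun i ↦ by simpa using hrec (i + 1) (by omega)) ht
  rw [← sum_div, ← mul_sum, hD0, ← mul_assoc] at hgrowth
  have hL : 0 < log (1 / ((1 + ε') * m * δ)) :=
    log_pos ((one_lt_div (by positivity)).2 (by simpa using hmδ))
  simpa using div_le_div_and_div_mul_le_of_le_mul_div hβ0 hε hL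
    (log_one_div_le_of_one_le_mul_exp (by positivity) hgrowth)

/-- **Dual-growth bound (Garg–Könemann style).** With `D(0) = mδ`,
`D(i) ≤ (1 + ε'z⁽ⁱ⁾/β)·D(i−1)`, `z⁽ⁱ⁾ ∈ [0,1]`, `β ≥ 1`, `(1+ε')mδ < 1`, and `t` the
first index with `D(t) ≥ 1`, the total `Z = Σ_{j ≤ t−1} z⁽ʲ⁾` satisfies
`β/Z ≤ ε'/ln(1/((1+ε')mδ))`, equivalently `Z ≥ (β/ε')·ln(1/((1+ε')mδ))`. -/
theorem dual_growth_bound (ε' β m δ : ℝ) (t : ℕ) (z D : ℕ → ℝ)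
    (hε : 0 < ε') (hβ : 1 ≤ β) (hm : 1 ≤ m) (hδ0 : 0 < δ) (hδ1 : δ < 1)
    (hmδ : (1 + ε') * m * δ < 1)
    (hz : ∀ i, 0 ≤ z i ∧ z i ≤ 1)
    (hD0 : D 0 = m * δ)
    (hrec : ∀ i : ℕ, 1 ≤ i → D i ≤ (1 + ε' * z i / β) * D (i - 1))
    (ht : 1 ≤ D t) (hfirst : ∀ i < t, D i < 1) :
    β / (∑ j ∈ Finset.Icc 1 (t - 1), z j)
        ≤ ε' / Real.log (1 / ((1 + ε') * m * δ)) ∧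
    (β / ε') * Real.log (1 / ((1 + ε') * m * δ)) ≤ ∑ j ∈ Finset.Icc 1 (t - 1), z j :=
  dual_growth_bound_general ε' β m δ t z D hε hβ hm hδ0 hmδ hz hD0 hrec ht
end
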